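/- arXiv:2107.07995 — 4 statements merged into one kernel-verified Lean document; each statement's English description precedes it below -/
import Mathlib

section
/- Let f : [0,1] → ℝ be a strictly convex function. Let X be a collection of supporting tangent lines of f, i.e., lines y = ax + b such that there exists x₀ ∈ [0,1] with a·x₀ + b = f(x₀) and a·x + b < f(x) for all x ∈ [0,1] with x ≠ x₀. If the set of slopes {a : (y = ax+b) ∈ X} has Hausdorff dimension 0, then the union ⋃X (as a subset of ℝ²) has Hausdorff dimension at most 1. -/
/-!
If the lines `y = a x + b` and `y = a' x + b'` both support `f` on `[0, 1]`, evaluating each at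
the other's contact point `x₀ ∈ [0, 1]` gives `|b - b'| ≤ |a - a'|`. So `Y`, the graph of a
1-Lipschitz function over its set of slopes, has dimension `0`. The union of the lines is the
image of `Y × ℝ` under the smooth map `((a, b), t) ↦ (t, a t + b)`, and `dimH (Y × ℝ) ≤ 1`: for
`s > 0`, a set `T` of diameter at most `r` from an `s`-null cover of `Y` gives about `1 / r` boxes
`T × [n + k r, n + (k + 1) r]` covering `T × [n, n + 1]`, whose `(1 + s)`-sum is about `r ^ s`.
-/

open Set MeasureTheory

/-- The non-vertical line in `ℝ²` with slope `a` and intercept `b`. -/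
def lineAB (a b : ℝ) : Set (ℝ × ℝ) := {q : ℝ × ℝ | q.2 = a * q.1 + b}

/-- The line `y = a x + b` is a supporting tangent line of `f : [0,1] → ℝ`. -/
def IsSuppTangent (f : ℝ → ℝ) (a b : ℝ) : Prop :=
  ∃ x₀ ∈ Set.Icc (0 : ℝ) 1, a * x₀ + b = f x₀ ∧
    ∀ x ∈ Set.Icc (0 : ℝ) 1, x ≠ x₀ → a * x + b < f x

open Metric Filter Topology
open scoped ENNReal NNReal

theorem ediam_prod_le {X Z : Type*} [PseudoEMetricSpace X] [PseudoEMetricSpace Z]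
    (s : Set X) (t : Set Z) : ediam (s ×ˢ t) ≤ max (ediam s) (ediam t) :=
  ediam_le fun _ hp _ hq =>
    max_le_max (edist_le_ediam_of_mem hp.1 hq.1) (edist_le_ediam_of_mem hp.2 hq.2)

theorem Icc_subset_iUnion_Icc_add_mul (a b : ℝ) {r : ℝ} (hr : 0 < r) :
    Icc a b ⊆ ⋃ k : Fin (⌊(b - a) / r⌋₊ + 1), Icc (a + k * r) (a + k * r + r) := by
  intro y hy
  have hk : ⌊(y - a) / r⌋₊ < ⌊(b - a) / r⌋₊ + 1 :=
    Nat.lt_succ_of_le (Nat.floor_le_floor (by gcongr; exact hy.2))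
  refine mem_iUnion.2 ⟨⟨_, hk⟩, ?_, ?_⟩
  · have := Nat.floor_le (div_nonneg (sub_nonneg.2 hy.1) hr.le)
    rw [le_div_iff₀ hr] at this
    simp only; linarith
  · have := Nat.lt_floor_add_one ((y - a) / r)
    rw [div_lt_iff₀ hr] at this
    simp only; linarith

theorem exists_cover_prod_Icc {X : Type*} [PseudoEMetricSpace X] {T : Set X} {r : ℝ≥0}
    (hr : 0 < r) (hT : ediam T ≤ r) {a b : ℝ} (hab : a ≤ b) {s : ℝ} (hs : 0 ≤ s) :
    ∃ (N : ℕ) (u : Fin N → Set (X × ℝ)), T ×ˢ Icc a b ⊆ ⋃ k, u k ∧ (∀ k, ediam (u k) ≤ r) ∧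
      ∑ k, ediam (u k) ^ (1 + s) ≤ ENNReal.ofReal (b - a + r) * (r : ℝ≥0∞) ^ s := by
  have hr' : (0 : ℝ) < r := hr
  set N := ⌊(b - a) / r⌋₊ + 1
  set u : Fin N → Set (X × ℝ) := fun k => T ×ˢ Icc (a + k * r) (a + k * r + r)
  have hu k : ediam (u k) ≤ r := by
    refine (ediam_prod_le _ _).trans (max_le hT ?_)
    rw [Real.ediam_Icc, add_sub_cancel_left, ENNReal.ofReal_coe_nnreal]
  have hNr : (N : ℝ≥0∞) * r ≤ ENNReal.ofReal (b - a + r) := by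
    have := Nat.floor_le (div_nonneg (sub_nonneg.2 hab) hr'.le)
    rw [le_div_iff₀ hr'] at this
    rw [← ENNReal.ofReal_natCast, ← ENNReal.ofReal_coe_nnreal,
      ← ENNReal.ofReal_mul (Nat.cast_nonneg _)]
    exact ENNReal.ofReal_le_ofReal (by push_cast [N]; linarith)
  refine ⟨N, u, ?_, hu, ?_⟩
  · rintro ⟨x, y⟩ ⟨hx, hy⟩
    obtain ⟨k, hk⟩ := mem_iUnion.1 (Icc_subset_iUnion_Icc_add_mul a b hr' hy)
    exact mem_iUnion.2 ⟨k, hx, hk⟩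
  calc ∑ k, ediam (u k) ^ (1 + s)
      ≤ ∑ _ : Fin N, (r : ℝ≥0∞) ^ (1 + s) :=
        Finset.sum_le_sum fun k _ => ENNReal.rpow_le_rpow (hu k) (by positivity)
    _ = N * r * (r : ℝ≥0∞) ^ s := by
        rw [Finset.sum_const, Finset.card_univ, Fintype.card_fin, nsmul_eq_mul,
          ENNReal.rpow_add _ _ (ENNReal.coe_ne_zero.2 hr.ne') ENNReal.coe_ne_top,
          ENNReal.rpow_one, mul_assoc]
    _ ≤ ENNReal.ofReal (b - a + r) * (r : ℝ≥0∞) ^ s := by gcongr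

section HausdorffNull

variable {X : Type*} [EMetricSpace X] [MeasurableSpace X] [BorelSpace X] {s : ℝ} {A : Set X}

theorem exists_cover_tsum_ediam_rpow_lt (hs : 0 < s) (hA : μH[s] A = 0) {r ε : ℝ≥0∞}
    (hr : 0 < r) (hε : 0 < ε) :
    ∃ T : ℕ → Set X, A ⊆ ⋃ i, T i ∧ (∀ i, ediam (T i) ≤ r) ∧ ∑' i, ediam (T i) ^ s < ε := by
  simp only [Measure.hausdorffMeasure_apply, ENNReal.iSup_eq_zero] at hA
  rw [← hA r hr] at hε
  simp only [iInf_lt_iff] at hε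
  obtain ⟨T, hTA, hTr, hT⟩ := hε
  refine ⟨T, hTA, hTr, lt_of_eq_of_lt (tsum_congr fun i => ?_) hT⟩
  rcases (T i).eq_empty_or_nonempty with h | h <;> simp [h, hs]

theorem exists_pos_cover_tsum_rpow_le (hs : 0 < s) (hA : μH[s] A = 0) {ε : ℝ≥0∞} (hε : 0 < ε) :
    ∃ (T : ℕ → Set X) (r : ℕ → ℝ≥0), A ⊆ ⋃ i, T i ∧ (∀ i, 0 < r i ∧ ediam (T i) ≤ r i) ∧
      ∑' i, (r i : ℝ≥0∞) ^ s ≤ ε := by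
  obtain ⟨T, hTA, hT1, hT⟩ :=
    exists_cover_tsum_ediam_rpow_lt hs hA one_pos (ENNReal.half_pos hε.ne')
  obtain ⟨w, hw, hwε⟩ := ENNReal.exists_pos_sum_of_countable (ENNReal.half_pos hε.ne').ne' ℕ
  have hT_ne_top i : ediam (T i) ≠ ∞ := ((hT1 i).trans_lt ENNReal.one_lt_top).ne
  -- the floor `w i ^ s⁻¹` keeps the gauge positive on covering sets of diameter zero
  refine ⟨T, fun i => max (ediam (T i)).toNNReal (w i ^ s⁻¹), hTA, fun i => ⟨?_, ?_⟩, ?_⟩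
  · exact lt_max_of_lt_right (NNReal.rpow_pos (hw i))
  · rw [ENNReal.coe_max, ENNReal.coe_toNNReal (hT_ne_top i)]
    exact le_max_left _ _
  calc ∑' i, ((max (ediam (T i)).toNNReal (w i ^ s⁻¹) : ℝ≥0) : ℝ≥0∞) ^ s
      ≤ ∑' i, (ediam (T i) ^ s + w i) := by
        refine ENNReal.tsum_le_tsum fun i => ?_
        rw [ENNReal.coe_max, ENNReal.coe_toNNReal (hT_ne_top i), ENNReal.max_rpow hs.le,
          ENNReal.coe_rpow_of_nonneg _ (inv_nonneg.2 hs.le), ← ENNReal.rpow_mul,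
          inv_mul_cancel₀ hs.ne', ENNReal.rpow_one]
        exact max_le le_self_add le_add_self
    _ = ∑' i, ediam (T i) ^ s + ∑' i, (w i : ℝ≥0∞) := ENNReal.tsum_add
    _ ≤ ε / 2 + ε / 2 := add_le_add hT.le hwε.le
    _ = ε := ENNReal.add_halves ε

theorem hausdorffMeasure_prod_Icc_eq_zero (hs : 0 < s) (hA : μH[s] A = 0) (a b : ℝ) :
    μH[1 + s] (A ×ˢ Icc a b) = 0 := by
  rcases lt_or_ge b a with hba | hab
  · simp [Icc_eq_empty_of_lt hba]
  set δ : ℕ → ℝ≥0 := fun n => ((n + 1 : ℕ) : ℝ≥0)⁻¹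
  have hδ_pos n : 0 < ((δ n : ℝ≥0∞) ^ s) := by positivity
  have hδ_le_one n : δ n ≤ 1 := inv_le_one_of_one_le₀ (by simp)
  have hδ_lim : Tendsto (fun n => (δ n : ℝ≥0∞)) atTop (𝓝 0) :=
    ENNReal.tendsto_coe.2 (tendsto_inv_atTop_nhds_zero_nat.comp (tendsto_add_atTop_nat 1))
  choose T r hTA hTr hsum using fun n => exists_pos_cover_tsum_rpow_le hs hA (hδ_pos n)
  have hrδ n i : r n i ≤ δ n := by
    have : (r n i : ℝ≥0∞) ^ s ≤ (δ n : ℝ≥0∞) ^ s :=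
      (ENNReal.le_tsum (f := fun i => (r n i : ℝ≥0∞) ^ s) i).trans (hsum n)
    exact_mod_cast (ENNReal.rpow_le_rpow_iff hs).1 this
  choose N u hAu hu hsum_u using fun n i =>
    exists_cover_prod_Icc (hTr n i).1 (hTr n i).2 hab hs.le
  set L := ENNReal.ofReal (b - a + 1)
  have hsum_u_le n i : ∑ k, ediam (u n i k) ^ (1 + s) ≤ L * (r n i : ℝ≥0∞) ^ s := by
    have hr1 : (r n i : ℝ) ≤ 1 := by exact_mod_cast (hrδ n i).trans (hδ_le_one n)
    exact (hsum_u n i).trans (by gcongr; exact ENNReal.ofReal_le_ofReal (by linarith))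
  refine le_antisymm ?_ bot_le
  calc μH[1 + s] (A ×ˢ Icc a b)
      ≤ liminf (fun n => ∑' p : Σ i, Fin (N n i), ediam (u n p.1 p.2) ^ (1 + s)) atTop := by
        refine Measure.hausdorffMeasure_le_liminf_tsum _ _ _ hδ_lim _
          (Eventually.of_forall fun n p => (hu n p.1 p.2).trans (by exact_mod_cast hrδ n p.1))
          (Eventually.of_forall fun n => ?_)
        rintro ⟨x, y⟩ ⟨hx, hy⟩
        obtain ⟨i, hi⟩ := mem_iUnion.1 (hTA n hx)
        obtain ⟨k, hk⟩ := mem_iUnion.1 (hAu n i ⟨hi, hy⟩)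
        exact mem_iUnion.2 ⟨⟨i, k⟩, hk⟩
    _ ≤ liminf (fun n => L * (δ n : ℝ≥0∞) ^ s) atTop := by
        refine liminf_le_liminf (Eventually.of_forall fun n => ?_)
        calc ∑' p : Σ i, Fin (N n i), ediam (u n p.1 p.2) ^ (1 + s)
            = ∑' i, ∑ k, ediam (u n i k) ^ (1 + s) := by
              simp only [ENNReal.tsum_sigma', tsum_fintype]
          _ ≤ ∑' i, L * (r n i : ℝ≥0∞) ^ s := ENNReal.tsum_le_tsum (hsum_u_le n)
          _ ≤ L * (δ n : ℝ≥0∞) ^ s := by rw [ENNReal.tsum_mul_left]; gcongr; exact hsum n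
    _ = 0 := by
        refine Tendsto.liminf_eq ?_
        have := ENNReal.Tendsto.const_mul (a := L)
          ((ENNReal.continuous_rpow_const (y := s)).tendsto 0 |>.comp hδ_lim)
          (Or.inr ENNReal.ofReal_ne_top)
        rwa [ENNReal.zero_rpow_of_pos hs, mul_zero] at this

end HausdorffNull

theorem dimH_prod_univ_le_one {X : Type*} [EMetricSpace X] {A : Set X} (hA : dimH A = 0) :
    dimH (A ×ˢ (univ : Set ℝ)) ≤ 1 := by
  borelize X
  rw [← iUnion_Icc_intCast ℝ, prod_iUnion, dimH_iUnion]
  refine iSup_le fun n => ENNReal.le_of_forall_pos_le_add fun ε hε _ => ?_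
  have hAε : μH[(ε : ℝ)] A = 0 := hausdorffMeasure_of_dimH_lt (by rw [hA]; exact_mod_cast hε)
  have h := hausdorffMeasure_prod_Icc_eq_zero (NNReal.coe_pos.2 hε) hAε n (n + 1)
  calc dimH (A ×ˢ Icc (n : ℝ) (n + 1)) ≤ ((1 + ε : ℝ≥0) : ℝ≥0∞) :=
        dimH_le_of_hausdorffMeasure_ne_top (by
          rw [NNReal.coe_add, NNReal.coe_one, h]; exact ENNReal.zero_ne_top)
    _ = 1 + ε := by push_cast; rfl

theorem IsSuppTangent.le_apply {f : ℝ → ℝ} {a b : ℝ} (h : IsSuppTangent f a b) {x : ℝ}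
    (hx : x ∈ Icc (0 : ℝ) 1) : a * x + b ≤ f x := by
  obtain ⟨x₀, -, hx₀, hlt⟩ := h
  rcases eq_or_ne x x₀ with rfl | hne
  · exact hx₀.le
  · exact (hlt x hx hne).le

theorem IsSuppTangent.intercept_le {f : ℝ → ℝ} {a b a' b' : ℝ} (h : IsSuppTangent f a b)
    (h' : IsSuppTangent f a' b') : b' ≤ b + |a - a'| := by
  obtain ⟨x₀, hx₀, hfx₀, -⟩ := h
  have hsupp := h'.le_apply hx₀
  have : (a - a') * x₀ ≤ |a - a'| := by
    calc (a - a') * x₀ ≤ |a - a'| * x₀ := by gcongr; exacts [hx₀.1, le_abs_self _]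
      _ ≤ |a - a'| := mul_le_of_le_one_right (abs_nonneg _) hx₀.2
  linarith

theorem IsSuppTangent.abs_sub_intercept_le {f : ℝ → ℝ} {a b a' b' : ℝ} (h : IsSuppTangent f a b)
    (h' : IsSuppTangent f a' b') : |b - b'| ≤ |a - a'| :=
  abs_sub_le_iff.2
    ⟨by linarith [h'.intercept_le h, abs_sub_comm a a'], by linarith [h.intercept_le h']⟩

theorem dimH_eq_dimH_fst_image {X Z : Type*} [MetricSpace X] [MetricSpace Z] {Y : Set (X × Z)}
    (hY : ∀ p ∈ Y, ∀ q ∈ Y, dist p.2 q.2 ≤ dist p.1 q.1) : dimH Y = dimH (Prod.fst '' Y) := by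
  have hfst : Isometry (fun p : Y => (p : X × Z).1) := by
    refine Isometry.of_dist_eq fun p q => ?_
    rw [Subtype.dist_eq, Prod.dist_eq, max_eq_left (hY p p.2 q q.2)]
  calc dimH Y = dimH ((Subtype.val : Y → X × Z) '' univ) := by
        rw [image_univ, Subtype.range_coe]
    _ = dimH (univ : Set Y) := isometry_subtype_coe.dimH_image _
    _ = dimH ((fun p : Y => (p : X × Z).1) '' univ) := (hfst.dimH_image _).symm
    _ = dimH (Prod.fst '' Y) := by rw [image_univ]; congr 1; ext; simp

theorem biUnion_lineAB_eq_image (Y : Set (ℝ × ℝ)) :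
    ⋃ p ∈ Y, lineAB p.1 p.2 =
      (fun q : (ℝ × ℝ) × ℝ => (q.2, q.1.1 * q.2 + q.1.2)) '' (Y ×ˢ univ) := by
  ext ⟨t, y⟩
  simp [lineAB, eq_comm]

theorem stmt_0_general (f : ℝ → ℝ)
    (Y : Set (ℝ × ℝ)) (hY : ∀ p ∈ Y, IsSuppTangent f p.1 p.2)
    (hslope : dimH (Prod.fst '' Y) = 0) :
    dimH (⋃ p ∈ Y, lineAB p.1 p.2) ≤ 1 := by
  have hY0 : dimH Y = 0 := by
    rw [dimH_eq_dimH_fst_image fun p hp q hq => (hY p hp).abs_sub_intercept_le (hY q hq), hslope]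
  rw [biUnion_lineAB_eq_image]
  calc dimH (_ '' (Y ×ˢ univ)) ≤ dimH (Y ×ˢ (univ : Set ℝ)) :=
        ContDiffOn.dimH_image_le (by fun_prop) convex_univ (subset_univ _)
    _ ≤ 1 := dimH_prod_univ_le_one hY0

theorem stmt_0 (f : ℝ → ℝ) (hf : StrictConvexOn ℝ (Set.Icc (0 : ℝ) 1) f)
    (Y : Set (ℝ × ℝ)) (hY : ∀ p ∈ Y, IsSuppTangent f p.1 p.2)
    (hslope : dimH (Prod.fst '' Y) = 0) :
    dimH (⋃ p ∈ Y, lineAB p.1 p.2) ≤ 1 :=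
  stmt_0_general f Y hY hslope
end

section
/- There exists a strictly increasing function f : [0,1] → ℝ whose range f([0,1]) has Hausdorff dimension 0. -/
/-!
Enumerate the rationals as `q₀, q₁, …` and put `f x = ∑_{qₙ < x} aₙ` with `aₙ = 2^(-2^n)`;
since the `qₙ` are dense and every `aₙ > 0`, `f` is strictly increasing. Every value of `f` is a
subset sum `∑_{n ∈ S} aₙ`, and knowing `S ∩ {0, …, N-1}` pins such a sum down to an interval of
length at most `2 a_N`. So for each `N` all subset sums are covered by `2^N` intervals of length
`2 a_N`, and `2^N (2 a_N)^d → 0` for every `d > 0` because `a_N` decays doubly exponentially.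
-/

open Set MeasureTheory Filter Topology
open scoped ENNReal

theorem dimH_eq_zero_of_finite_covers {X : Type*} [EMetricSpace X] [MeasurableSpace X]
    [BorelSpace X] {s : Set X} {ι : ℕ → Type*} [∀ n, Fintype (ι n)] (t : ∀ n, ι n → Set X)
    (r : ℕ → ℝ≥0∞) (hr : Tendsto r atTop (𝓝 0)) (ht : ∀ n i, Metric.ediam (t n i) ≤ r n)
    (hst : ∀ n, s ⊆ ⋃ i, t n i)
    (hcount : ∀ d : ℝ, 0 < d →
      Tendsto (fun n => (Fintype.card (ι n) : ℝ≥0∞) * r n ^ d) atTop (𝓝 0)) :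
    dimH s = 0 := by
  refine nonpos_iff_eq_zero.1 (dimH_le fun d hd => ?_)
  by_contra! hpos
  have hμ : μH[d] s ≤ 0 := calc
    μH[d] s ≤ liminf (fun n => ∑ i, Metric.ediam (t n i) ^ (d : ℝ)) atTop :=
      Measure.hausdorffMeasure_le_liminf_sum _ s r hr t (.of_forall ht) (.of_forall hst)
    _ ≤ liminf (fun n => (Fintype.card (ι n) : ℝ≥0∞) * r n ^ (d : ℝ)) atTop := by
      refine liminf_le_liminf (.of_forall fun n => ?_)
      calc ∑ i, Metric.ediam (t n i) ^ (d : ℝ) ≤ ∑ _i : ι n, r n ^ (d : ℝ) :=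
            Finset.sum_le_sum fun i _ => ENNReal.rpow_le_rpow (ht n i) d.coe_nonneg
        _ = _ := by simp
    _ = 0 := (hcount d (by exact_mod_cast hpos)).liminf_eq
  simp [hd] at hμ

theorem strictMono_tsum_indicator_lt {a q : ℕ → ℝ} (ha : ∀ n, 0 < a n) (hsum : Summable a)
    (hq : DenseRange q) : StrictMono fun x => ∑' n, {n | q n < x}.indicator a n := by
  intro x y hxy
  obtain ⟨_, ⟨n, rfl⟩, hxn, hny⟩ := hq.exists_between hxy
  have hsub : {k | q k < x} ⊆ {k | q k < y} := fun k hk => lt_trans hk hxy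
  refine Summable.tsum_lt_tsum_of_nonneg (i := n) (indicator_nonneg fun k _ => (ha k).le)
    (indicator_le_indicator_of_subset hsub fun k => (ha k).le) ?_ (hsum.indicator _)
  simp [hxn.not_gt, hny, ha n]

theorem tsum_indicator_mem_Icc {a : ℕ → ℝ} (ha : ∀ n, 0 ≤ a n) (hsum : Summable a)
    (S : Set ℕ) (N : ℕ) : ∃ u ∈ (Finset.range N).powerset,
      ∑' n, S.indicator a n ∈ Icc (∑ n ∈ u, a n) (∑ n ∈ u, a n + ∑' n, a (n + N)) := by
  classical
  refine ⟨(Finset.range N).filter (· ∈ S), Finset.mem_powerset.2 (Finset.filter_subset _ _), ?_⟩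
  have hhead : ∑ n ∈ (Finset.range N).filter (· ∈ S), a n
      = ∑ n ∈ Finset.range N, S.indicator a n := by
    rw [Finset.sum_filter]; rfl
  have htail : ∑' n, S.indicator a (n + N) ≤ ∑' n, a (n + N) :=
    Summable.tsum_le_tsum (fun n => indicator_le_self' (fun _ _ => ha _) _)
      ((hsum.indicator S).comp_injective (add_left_injective N))
      (hsum.comp_injective (add_left_injective N))
  have htail_nonneg : 0 ≤ ∑' n, S.indicator a (n + N) :=
    tsum_nonneg fun n => indicator_nonneg (fun _ _ => ha _) _
  rw [hhead, ← (hsum.indicator S).sum_add_tsum_nat_add N]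
  exact ⟨by linarith, by linarith⟩

theorem le_mul_half_pow_of_le_half {a : ℕ → ℝ} (hhalf : ∀ n, a (n + 1) ≤ a n / 2) (N n : ℕ) :
    a (n + N) ≤ a N * (1 / 2) ^ n := by
  induction n with
  | zero => simp
  | succ n ih =>
    calc a (n + 1 + N) = a (n + N + 1) := by rw [add_right_comm]
      _ ≤ a (n + N) / 2 := hhalf _
      _ ≤ a N * (1 / 2) ^ n / 2 := by gcongr
      _ = a N * (1 / 2) ^ (n + 1) := by ring

theorem tsum_nat_add_le_two_mul_of_le_half {a : ℕ → ℝ} (ha : ∀ n, 0 ≤ a n)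
    (hhalf : ∀ n, a (n + 1) ≤ a n / 2) (N : ℕ) : ∑' n, a (n + N) ≤ 2 * a N := by
  have hgeom : Summable fun n : ℕ => a N * (1 / 2 : ℝ) ^ n :=
    summable_geometric_two.mul_left _
  calc ∑' n, a (n + N) ≤ ∑' n : ℕ, a N * (1 / 2) ^ n :=
        Summable.tsum_le_tsum (le_mul_half_pow_of_le_half hhalf N)
          (.of_nonneg_of_le (fun _ => ha _) (le_mul_half_pow_of_le_half hhalf N) hgeom) hgeom
    _ = 2 * a N := by rw [tsum_mul_left, tsum_geometric_two, mul_comm]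

theorem summable_of_le_half {a : ℕ → ℝ} (ha : ∀ n, 0 ≤ a n)
    (hhalf : ∀ n, a (n + 1) ≤ a n / 2) : Summable a :=
  .of_nonneg_of_le ha (fun n => le_mul_half_pow_of_le_half hhalf 0 n)
    (summable_geometric_two.mul_left _)

theorem dimH_range_tsum_indicator_eq_zero {a : ℕ → ℝ} (ha : ∀ n, 0 ≤ a n)
    (hhalf : ∀ n, a (n + 1) ≤ a n / 2)
    (hdecay : ∀ d : ℝ, 0 < d → Tendsto (fun N => 2 ^ N * a N ^ d) atTop (𝓝 0)) :
    dimH (range fun S : Set ℕ => ∑' n, S.indicator a n) = 0 := by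
  have hsum := summable_of_le_half ha hhalf
  refine dimH_eq_zero_of_finite_covers
    (fun N (u : (Finset.range N).powerset) => Icc (∑ n ∈ u.1, a n) (∑ n ∈ u.1, a n + 2 * a N))
    (fun N => ENNReal.ofReal (2 * a N)) ?_ (fun N u => by rw [Real.ediam_Icc, add_sub_cancel_left])
    ?_ fun d hd => ?_
  · simpa using ENNReal.tendsto_ofReal (hsum.tendsto_atTop_zero.const_mul 2)
  · rintro N _ ⟨S, rfl⟩
    obtain ⟨u, hu, hmem⟩ := tsum_indicator_mem_Icc ha hsum S N
    refine mem_iUnion.2 ⟨⟨u, hu⟩, hmem.1, hmem.2.trans ?_⟩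
    gcongr
    exact tsum_nat_add_le_two_mul_of_le_half ha hhalf N
  · have hcard : ∀ N, (Fintype.card (Finset.range N).powerset : ℝ≥0∞) *
        ENNReal.ofReal (2 * a N) ^ d = ENNReal.ofReal (2 ^ d * (2 ^ N * a N ^ d)) := by
      intro N
      have h2a : 0 ≤ 2 * a N := by linarith [ha N]
      rw [Fintype.card_coe, Finset.card_powerset, Finset.card_range,
        ENNReal.ofReal_rpow_of_nonneg h2a hd.le, show (2 : ℝ) ^ d * (2 ^ N * a N ^ d)
          = 2 ^ N * (2 * a N) ^ d by rw [Real.mul_rpow zero_le_two (ha N)]; ring,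
        ENNReal.ofReal_mul (by positivity)]
      simp [ENNReal.ofReal_pow]
    simp only [hcard]
    simpa using ENNReal.tendsto_ofReal ((hdecay d hd).const_mul (2 ^ d))

theorem half_pow_two_pow_succ_le (n : ℕ) : (1 / 2 : ℝ) ^ 2 ^ (n + 1) ≤ (1 / 2) ^ 2 ^ n / 2 := by
  have hle : (1 / 2 : ℝ) ^ 2 ^ n ≤ 1 / 2 :=
    pow_le_of_le_one (by norm_num) (by norm_num) (pow_ne_zero n two_ne_zero)
  calc (1 / 2 : ℝ) ^ 2 ^ (n + 1) = (1 / 2) ^ 2 ^ n * (1 / 2) ^ 2 ^ n := by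
        rw [pow_succ, pow_mul, sq]
    _ ≤ (1 / 2) ^ 2 ^ n * (1 / 2) := by gcongr
    _ = (1 / 2) ^ 2 ^ n / 2 := by ring

theorem tendsto_two_pow_mul_half_pow_two_pow_rpow {d : ℝ} (hd : 0 < d) :
    Tendsto (fun N : ℕ => 2 ^ N * ((1 / 2 : ℝ) ^ 2 ^ N) ^ d) atTop (𝓝 0) := by
  have hc : (1 / 2 : ℝ) ^ d < 1 := Real.rpow_lt_one (by norm_num) (by norm_num) hd
  have h := (tendsto_self_mul_const_pow_of_lt_one (by positivity) hc).comp
    (tendsto_pow_atTop_atTop_of_one_lt one_lt_two)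
  refine h.congr fun N => ?_
  simp [Real.rpow_pow_comm]

theorem stmt_4 :
    ∃ f : ℝ → ℝ, StrictMonoOn f (Set.Icc (0 : ℝ) 1) ∧
      dimH (f '' Set.Icc (0 : ℝ) 1) = 0 := by
  set a : ℕ → ℝ := fun n => (1 / 2) ^ 2 ^ n
  have ha : ∀ n, 0 ≤ a n := fun n => by positivity
  have hq : DenseRange fun n => ((Denumerable.eqv ℚ).symm n : ℝ) :=
    Rat.denseRange_cast.comp (Denumerable.eqv ℚ).symm.surjective.denseRange Rat.continuous_coe_real
  have hmono := strictMono_tsum_indicator_lt (a := a) (fun n => by positivity)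
    (summable_of_le_half ha half_pow_two_pow_succ_le) hq
  refine ⟨_, hmono.strictMonoOn _, nonpos_iff_eq_zero.1 ?_⟩
  have hσ := dimH_range_tsum_indicator_eq_zero ha half_pow_two_pow_succ_le
    fun _ => tendsto_two_pow_mul_half_pow_two_pow_rpow
  refine hσ ▸ dimH_mono ?_
  rintro _ ⟨x, -, rfl⟩
  exact ⟨_, rfl⟩
end

section
/- Let f : [0,1] → ℝ be a differentiable function whose derivative f' is not constant on [0,1]. Then the union of the tangent lines of f, i.e., the set {(x, f(t) + f'(t)·(x − t)) : t ∈ [0,1], x ∈ ℝ} ⊂ ℝ², has Hausdorff dimension 2. -/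
/-!
Write `L t x = f t + f' t * (x - t)` for the tangent at `t` evaluated at `x`. For fixed `x`, the
map `t ↦ L t x` is the derivative of `t ↦ (x - t) * f t + 2 * ∫ f`, so by Darboux's theorem it
takes every value between `L c x` and `L d x`. Hence every point lying strictly between the
tangents at `c` and `d` lies on some tangent. When `f' c ≠ f' d` these two tangents cross, so the
region strictly between them is a nonempty open subset of the plane and the union of the tangents
has dimension 2.
-/

open Set

def tangentUnion (f f' : ℝ → ℝ) (s : Set ℝ) : Set (ℝ × ℝ) :=
  {q | ∃ t ∈ s, q.2 = f t + f' t * (q.1 - t)}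

theorem ContinuousOn.exists_hasDerivAt_Icc {f : ℝ → ℝ} {a b : ℝ} (hab : a ≤ b)
    (hf : ContinuousOn f (Icc a b)) :
    ∃ F : ℝ → ℝ, ∀ t ∈ Icc a b, HasDerivAt F (f t) t := by
  set g := IccExtend hab ((Icc a b).domRestrict f)
  have hg : Continuous g :=
    continuous_IccExtend_iff.mpr (continuousOn_iff_continuous_domRestrict.mp hf)
  refine ⟨fun u => ∫ s in a..u, g s, fun t ht => ?_⟩
  simpa [g, IccExtend_of_mem hab _ ht, Set.domRestrict] using
    (hg.integral_hasStrictDerivAt a t).hasDerivAt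

theorem exists_hasDerivWithinAt_tangent {f f' : ℝ → ℝ} {a b : ℝ} (hab : a ≤ b)
    (hf : ∀ t ∈ Icc a b, HasDerivWithinAt f (f' t) (Icc a b) t) (x : ℝ) :
    ∃ G : ℝ → ℝ, ∀ t ∈ Icc a b,
      HasDerivWithinAt G (f t + f' t * (x - t)) (Icc a b) t := by
  obtain ⟨F, hF⟩ := ContinuousOn.exists_hasDerivAt_Icc hab
    fun t ht => (hf t ht).continuousWithinAt
  refine ⟨fun t => (x - t) * f t + 2 * F t, fun t ht => ?_⟩
  have := (((hasDerivWithinAt_id t _).const_sub x).mul (hf t ht)).add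
    ((hF t ht).hasDerivWithinAt.const_mul 2)
  exact this.congr_deriv (by simp only [id]; ring)

theorem mem_tangentUnion_of_between {f f' : ℝ → ℝ} {a b c d : ℝ}
    (hf : ∀ t ∈ Icc a b, HasDerivWithinAt f (f' t) (Icc a b) t) (hc : c ∈ Icc a b)
    (hd : d ∈ Icc a b) {q : ℝ × ℝ} (hcq : f c + f' c * (q.1 - c) < q.2)
    (hqd : q.2 < f d + f' d * (q.1 - d)) : q ∈ tangentUnion f f' (Icc a b) := by
  obtain ⟨G, hG⟩ := exists_hasDerivWithinAt_tangent (hc.1.trans hc.2) hf q.1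
  obtain ⟨t, ht, hq⟩ := (ordConnected_Icc.image_hasDerivWithinAt hG).out ⟨c, hc, rfl⟩
    ⟨d, hd, rfl⟩ ⟨hcq.le, hqd.le⟩
  exact ⟨t, ht, hq.symm⟩

theorem exists_tangent_lt_tangent {f f' : ℝ → ℝ} {c d : ℝ} (h : f' c ≠ f' d) :
    ∃ x, f c + f' c * (x - c) < f d + f' d * (x - d) := by
  have hcd : f' d - f' c ≠ 0 := sub_ne_zero.mpr h.symm
  refine ⟨(1 + f c - f' c * c - f d + f' d * d) / (f' d - f' c), ?_⟩
  have := mul_div_cancel₀ (1 + f c - f' c * c - f d + f' d * d) hcd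
  linarith

theorem interior_tangentUnion_nonempty {f f' : ℝ → ℝ} {a b c d : ℝ}
    (hf : ∀ t ∈ Icc a b, HasDerivWithinAt f (f' t) (Icc a b) t) (hc : c ∈ Icc a b)
    (hd : d ∈ Icc a b) (h : f' c ≠ f' d) :
    (interior (tangentUnion f f' (Icc a b))).Nonempty := by
  obtain ⟨x₀, hx₀⟩ := exists_tangent_lt_tangent (f := f) h
  set between :=
    {q : ℝ × ℝ | f c + f' c * (q.1 - c) < q.2 ∧ q.2 < f d + f' d * (q.1 - d)}
  have hopen : IsOpen between :=
    (isOpen_lt (by fun_prop) continuous_snd).inter (isOpen_lt continuous_snd (by fun_prop))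
  have hsub : between ⊆ tangentUnion f f' (Icc a b) :=
    fun q hq => mem_tangentUnion_of_between hf hc hd hq.1 hq.2
  refine ⟨(x₀, (f c + f' c * (x₀ - c) + (f d + f' d * (x₀ - d))) / 2),
    interior_mono hsub ?_⟩
  rw [hopen.interior_eq]
  constructor <;> dsimp only <;> linarith

theorem stmt_7 (f f' : ℝ → ℝ)
    (hderiv : ∀ x ∈ Set.Icc (0 : ℝ) 1, HasDerivWithinAt f (f' x) (Set.Icc (0 : ℝ) 1) x)
    (hnc : ∃ a ∈ Set.Icc (0 : ℝ) 1, ∃ b ∈ Set.Icc (0 : ℝ) 1, f' a ≠ f' b) :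
    dimH {q : ℝ × ℝ | ∃ t ∈ Set.Icc (0 : ℝ) 1, q.2 = f t + f' t * (q.1 - t)} = 2 := by
  obtain ⟨a, ha, b, hb, hab⟩ := hnc
  have hdim := Real.dimH_of_nonempty_interior (interior_tangentUnion_nonempty hderiv ha hb hab)
  rw [tangentUnion, Module.finrank_prod, Module.finrank_self] at hdim
  exact hdim
end

section
/- There exists a strictly increasing continuous function f : [0,1] → ℝ and a set C* ⊂ [0,1] with Hausdorff dimension 0 such that the image f([0,1] \ C*) has Hausdorff dimension 0. -/
/-!
Let `μ` be the law of `∑ₖ εₖ 2⁻¹ ^ (k + 1)` for independent bits `εₖ`, the positions `k` being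
grouped into the blocks `[(n + 1)! - 1, (n + 2)! - 1)`: in the even blocks the bits are fair, in
the odd block `n` a bit is `1` with probability `bias n = 2⁻¹ ^ ((n + 2)! ^ 2)`. The distribution
function `cdf` of `μ` is strictly increasing because every dyadic interval has positive mass, and
continuous because the fair blocks make the masses of the dyadic intervals of a fixed level
uniformly small.

The exceptional set consists of the points whose bits vanish on every odd block from some point
on. For such `x` the first `(n + 1)! - 1` bits and the zero odd block `n` locate `x` to precision
`2⁻¹ ^ ((n + 2)! - 1)`, so `2 ^ ((n + 1)!)` intervals of that length cover the set and its
dimension is `0`. Any other point has a `1` in some odd block `n ≥ N`, so `cdf x` lies in the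
`cdf`-image of a dyadic interval of level `(n + 2)! - 1` and mass at most `bias n`; these
`2 ^ ((n + 2)!)` images are negligible against `bias n ^ d` for every `d > 0`.
-/

open Set MeasureTheory Filter Topology
open scoped Finset Nat NNReal ENNReal

section Hausdorff

variable {X : Type*} [EMetricSpace X]

lemma tsum_ediam_rpow_le {t : ℕ → Set X} {n : ℕ} {c : ℝ≥0∞} {d : ℝ} (hd : 0 < d)
    (hempty : ∀ i, n ≤ i → t i = ∅) (hc : ∀ i, Metric.ediam (t i) ≤ c) :
    ∑' i, Metric.ediam (t i) ^ d ≤ n * c ^ d := by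
  rw [tsum_eq_sum (s := Finset.range n) fun i hi => by
    rw [hempty i (by simpa using hi), Metric.ediam_empty, ENNReal.zero_rpow_of_pos hd]]
  calc ∑ i ∈ Finset.range n, Metric.ediam (t i) ^ d ≤ ∑ _i ∈ Finset.range n, c ^ d :=
        Finset.sum_le_sum fun i _ => ENNReal.rpow_le_rpow (hc i) hd.le
    _ = n * c ^ d := by simp

variable [MeasurableSpace X] [BorelSpace X]

lemma dimH_eq_zero_of_hausdorffMeasure_eq_zero {s : Set X}
    (h : ∀ d : ℝ≥0, 0 < d → μH[d] s = 0) : dimH s = 0 := by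
  refine le_antisymm (ENNReal.le_of_forall_pos_le_add fun d hd _ => ?_) zero_le
  simpa using dimH_le_of_hausdorffMeasure_ne_top (by simp [h d hd])

lemma hausdorffMeasure_eq_zero_of_covers {ι : ℕ → Type*} [∀ N, Countable (ι N)] {s : Set X}
    {d : ℝ} (t : ∀ N, ι N → Set X) {r u : ℕ → ℝ≥0∞} (hr : Tendsto r atTop (𝓝 0))
    (hu : Tendsto u atTop (𝓝 0)) (hdiam : ∀ N i, Metric.ediam (t N i) ≤ r N)
    (hcover : ∀ N, s ⊆ ⋃ i, t N i)
    (hsum : ∀ᶠ N in atTop, ∑' i, Metric.ediam (t N i) ^ d ≤ u N) :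
    μH[d] s = 0 := by
  refine le_antisymm ?_ zero_le
  calc μH[d] s ≤ liminf (fun N => ∑' i, Metric.ediam (t N i) ^ d) atTop :=
        Measure.hausdorffMeasure_le_liminf_tsum d s r hr t (.of_forall hdiam) (.of_forall hcover)
    _ ≤ liminf u atTop := liminf_le_liminf hsum
    _ = 0 := hu.liminf_eq

end Hausdorff

lemma two_pow_mul_inv_two_pow_rpow_le {p q v : ℕ} {d : ℝ} (h : (p + v : ℝ) ≤ d * q) :
    (2 : ℝ≥0∞) ^ p * ((2⁻¹ : ℝ≥0∞) ^ q) ^ d ≤ 2⁻¹ ^ v := by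
  have hpow : ∀ n : ℕ, (2⁻¹ : ℝ≥0∞) ^ n = 2 ^ (-(n : ℝ)) := fun n => by
    rw [ENNReal.rpow_neg, ENNReal.rpow_natCast, ENNReal.inv_pow]
  rw [hpow, hpow, ← ENNReal.rpow_natCast, ← ENNReal.rpow_mul,
    ← ENNReal.rpow_add _ _ (by norm_num) (by norm_num)]
  exact ENNReal.rpow_le_rpow_of_exponent_le (by norm_num) (by nlinarith)

lemma ofReal_inv_two_pow (n : ℕ) : ENNReal.ofReal (2⁻¹ ^ n) = 2⁻¹ ^ n := by
  rw [ENNReal.ofReal_pow (by norm_num), ENNReal.ofReal_inv_of_pos two_pos, ENNReal.ofReal_ofNat]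

lemma tendsto_inv_two_pow : Tendsto (fun n : ℕ => (2⁻¹ : ℝ≥0∞) ^ n) atTop (𝓝 0) :=
  ENNReal.tendsto_pow_atTop_nhds_zero_of_lt_one (by norm_num)

namespace BlockBernoulli

noncomputable section

def blockStart (n : ℕ) : ℕ := (n + 1)! - 1

def block (k : ℕ) : ℕ := Nat.findGreatest (fun n => blockStart n ≤ k) k

lemma blockStart_add_one (n : ℕ) : blockStart n + 1 = (n + 1)! := by
  have := Nat.factorial_pos (n + 1)
  unfold blockStart; omega

lemma blockStart_strictMono : StrictMono blockStart := by
  intro a b h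
  have := blockStart_add_one a
  have := blockStart_add_one b
  have : (a + 1)! < (b + 1)! := (Nat.factorial_lt (Nat.succ_pos a)).2 (by omega)
  omega

lemma le_blockStart (n : ℕ) : n ≤ blockStart n := by
  have := blockStart_add_one n
  have := Nat.self_le_factorial (n + 1)
  omega

lemma blockStart_succ_add_one (n : ℕ) :
    blockStart (n + 1) + 1 = (n + 2) * (blockStart n + 1) := by
  rw [blockStart_add_one, blockStart_add_one, Nat.factorial_succ]

lemma block_eq {n k : ℕ} (h₁ : blockStart n ≤ k) (h₂ : k < blockStart (n + 1)) : block k = n := by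
  rw [block, Nat.findGreatest_eq_iff]
  refine ⟨(le_blockStart n).trans h₁, fun _ => h₁, fun n' hn' _ => ?_⟩
  exact not_le.2 (h₂.trans_le (blockStart_strictMono.monotone hn'))

lemma block_blockStart (n : ℕ) : block (blockStart n) = n :=
  block_eq le_rfl (blockStart_strictMono n.lt_succ_self)

lemma lt_blockStart_block_add_one (k : ℕ) : k < blockStart (block k + 1) := by
  by_contra! h
  have hle : block k + 1 ≤ k := (le_blockStart _).trans h
  exact Nat.findGreatest_is_greatest (P := fun n => blockStart n ≤ k) (Nat.lt_succ_self _) hle h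

lemma mul_blockStart_add_one_le (n : ℕ) :
    (n + 1) * (blockStart n + 1) ≤ blockStart (n + 1) := by
  have := blockStart_succ_add_one n
  rw [show n + 2 = n + 1 + 1 by rfl, add_one_mul] at this
  omega

def bias (n : ℕ) : ℝ := 2⁻¹ ^ ((n + 2)! ^ 2)

lemma bias_pos (n : ℕ) : 0 < bias n := by unfold bias; positivity

lemma bias_lt_one (n : ℕ) : bias n < 1 :=
  pow_lt_one₀ (by norm_num) (by norm_num) (pow_ne_zero _ (Nat.factorial_ne_zero _))

def weight (k : ℕ) (b : Bool) : ℝ :=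
  if Even (block k) then 2⁻¹ else if b then bias (block k) else 1 - bias (block k)

lemma weight_pos (k : ℕ) (b : Bool) : 0 < weight k b := by
  unfold weight
  have := bias_pos (block k)
  have := bias_lt_one (block k)
  split_ifs <;> linarith

lemma weight_le_one (k : ℕ) (b : Bool) : weight k b ≤ 1 := by
  unfold weight
  have := bias_pos (block k)
  have := bias_lt_one (block k)
  split_ifs <;> linarith

lemma weight_false_add_weight_true (k : ℕ) : weight k false + weight k true = 1 := by
  by_cases h : Even (block k) <;> simp [weight, h]
  norm_num

lemma weight_true_of_odd {k : ℕ} (hk : Odd (block k)) : weight k true = bias (block k) := by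
  simp [weight, Nat.not_even_iff_odd.2 hk]

/-- The mass of the dyadic interval `[i / 2 ^ m, (i + 1) / 2 ^ m]`. -/
def cylMass : ℕ → ℕ → ℝ
  | 0, _ => 1
  | m + 1, i => cylMass m (i / 2) * weight m (i % 2 = 1)

lemma cylMass_succ (m i : ℕ) (b : Bool) :
    cylMass (m + 1) (2 * i + b.toNat) = cylMass m i * weight m b := by
  have h₀ : 2 * i / 2 = i := by omega
  have h₁ : (2 * i + 1) / 2 = i := by omega
  cases b <;> simp [cylMass, h₀, h₁]

lemma cylMass_pos (m i : ℕ) : 0 < cylMass m i := by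
  induction m generalizing i with
  | zero => exact one_pos
  | succ m ih => exact mul_pos (ih _) (weight_pos _ _)

lemma cylMass_two_mul_add_cylMass (m i : ℕ) :
    cylMass (m + 1) (2 * i) + cylMass (m + 1) (2 * i + 1) = cylMass m i := by
  simpa [← mul_add, weight_false_add_weight_true] using
    congrArg₂ (· + ·) (cylMass_succ m i false) (cylMass_succ m i true)

lemma sum_range_two_mul_cylMass (m n : ℕ) :
    ∑ j ∈ Finset.range (2 * n), cylMass (m + 1) j = ∑ j ∈ Finset.range n, cylMass m j := by
  induction n with
  | zero => simp
  | succ n ih =>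
    rw [mul_add_one, Finset.sum_range_succ, Finset.sum_range_succ, Finset.sum_range_succ, ih,
      add_assoc, cylMass_two_mul_add_cylMass]

lemma sum_range_cylMass (m : ℕ) : ∑ i ∈ Finset.range (2 ^ m), cylMass m i = 1 := by
  induction m with
  | zero => simp [cylMass]
  | succ m ih => rw [pow_succ', sum_range_two_mul_cylMass, ih]

lemma cylMass_le_one (m i : ℕ) : cylMass m i ≤ 1 := by
  induction m generalizing i with
  | zero => exact le_rfl
  | succ m ih => exact mul_le_one₀ (ih _) (weight_pos _ _).le (weight_le_one _ _)

lemma cylMass_le_inv_two_pow_card (m i : ℕ) :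
    cylMass m i ≤ 2⁻¹ ^ #{k ∈ Finset.range m | Even (block k)} := by
  induction m generalizing i with
  | zero => simp [cylMass]
  | succ m ih =>
    rw [cylMass, Finset.range_add_one, Finset.filter_insert]
    by_cases h : Even (block m)
    · rw [if_pos h, Finset.card_insert_of_notMem (by simp), pow_succ, weight, if_pos h]
      exact mul_le_mul_of_nonneg_right (ih _) (by norm_num)
    · rw [if_neg h]
      exact (mul_le_of_le_one_right (cylMass_pos _ _).le (weight_le_one _ _)).trans (ih _)

/-- Witnessed by the starting positions of the blocks `0, 2, …, 2 * c - 2`. -/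
lemma le_card_even_block (c : ℕ) :
    c ≤ #{k ∈ Finset.range (blockStart (2 * c)) | Even (block k)} := by
  have hinj : Set.InjOn (fun j => blockStart (2 * j)) (Finset.range c) :=
    fun a _ b _ h => by simpa using blockStart_strictMono.injective h
  calc c = #((Finset.range c).image fun j => blockStart (2 * j)) := by
        rw [Finset.card_image_of_injOn hinj, Finset.card_range]
    _ ≤ _ := Finset.card_le_card fun k hk => by
        obtain ⟨j, hj, rfl⟩ := Finset.mem_image.1 hk
        simp only [Finset.mem_filter, Finset.mem_range, block_blockStart, even_two_mul, and_true]
        exact blockStart_strictMono (by simp at hj; omega)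

lemma exists_forall_cylMass_lt {ε : ℝ} (hε : 0 < ε) : ∃ m, ∀ i, cylMass m i < ε := by
  obtain ⟨c, hc⟩ := exists_pow_lt_of_lt_one hε (by norm_num : (2⁻¹ : ℝ) < 1)
  refine ⟨blockStart (2 * c), fun i => (cylMass_le_inv_two_pow_card _ i).trans_lt ?_⟩
  exact (pow_le_pow_of_le_one (by norm_num) (by norm_num) (le_card_even_block c)).trans_lt hc

/-- The binary digit of `x` in position `k + 1`, i.e. the coefficient of `2⁻¹ ^ (k + 1)`. -/
def digit (k : ℕ) (x : ℝ) : Bool := ⌊2 ^ (k + 1) * x⌋₊ % 2 = 1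

def dyadicIndex (m : ℕ) (x : ℝ) : ℕ := min (2 ^ m) ⌊2 ^ m * x⌋₊

def partialMass (m : ℕ) (x : ℝ) : ℝ := ∑ i ∈ Finset.range (dyadicIndex m x), cylMass m i

def cdf (x : ℝ) : ℝ := ⨆ m, partialMass m x

lemma dyadicIndex_le (m : ℕ) (x : ℝ) : dyadicIndex m x ≤ 2 ^ m := min_le_left _ _

lemma dyadicIndex_eq_floor {x : ℝ} (hx : x ≤ 1) (m : ℕ) : dyadicIndex m x = ⌊2 ^ m * x⌋₊ := by
  refine min_eq_right ?_
  calc ⌊2 ^ m * x⌋₊ ≤ ⌊((2 ^ m : ℕ) : ℝ)⌋₊ :=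
        Nat.floor_mono (by push_cast; nlinarith [pow_pos (two_pos : (0 : ℝ) < 2) m])
    _ = 2 ^ m := Nat.floor_natCast _

lemma dyadicIndex_mono (m : ℕ) : Monotone (dyadicIndex m) := fun _ _ h =>
  min_le_min le_rfl (Nat.floor_mono (mul_le_mul_of_nonneg_left h (by positivity)))

lemma dyadicIndex_succ {x : ℝ} (hx : x ≤ 1) (m : ℕ) :
    dyadicIndex (m + 1) x = 2 * dyadicIndex m x + (digit m x).toNat := by
  have hdiv : ⌊2 ^ (m + 1) * x⌋₊ / 2 = ⌊2 ^ m * x⌋₊ := by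
    rw [← Nat.floor_div_natCast]
    congr 1
    push_cast
    ring
  have hdigit : (digit m x).toNat = ⌊2 ^ (m + 1) * x⌋₊ % 2 := by
    rcases Nat.mod_two_eq_zero_or_one ⌊2 ^ (m + 1) * x⌋₊ with h | h <;> simp [digit, h]
  rw [dyadicIndex_eq_floor hx, dyadicIndex_eq_floor hx, hdigit, ← hdiv]
  omega

lemma partialMass_le_one (m : ℕ) (x : ℝ) : partialMass m x ≤ 1 := by
  rw [← sum_range_cylMass m]
  exact Finset.sum_le_sum_of_subset_of_nonneg
    (Finset.range_subset_range.2 (dyadicIndex_le m x)) fun i _ _ => (cylMass_pos m i).le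

lemma partialMass_mono (m : ℕ) : Monotone (partialMass m) := fun _ _ h =>
  Finset.sum_le_sum_of_subset_of_nonneg
    (Finset.range_subset_range.2 (dyadicIndex_mono m h)) fun i _ _ => (cylMass_pos m i).le

lemma partialMass_succ {x : ℝ} (hx : x ≤ 1) (m : ℕ) :
    partialMass (m + 1) x =
      partialMass m x + (digit m x).toNat * cylMass (m + 1) (2 * dyadicIndex m x) := by
  rw [partialMass, dyadicIndex_succ hx]
  cases digit m x
  · simp [partialMass, sum_range_two_mul_cylMass]
  · simp [partialMass, Finset.sum_range_succ, sum_range_two_mul_cylMass]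

lemma partialMass_monotone {x : ℝ} (hx : x ≤ 1) : Monotone fun m => partialMass m x := by
  refine monotone_nat_of_le_succ fun m => ?_
  rw [partialMass_succ hx]
  have := cylMass_pos (m + 1) (2 * dyadicIndex m x)
  cases digit m x <;> simp [this.le]

/-- `partialMass m x + cylMass m (dyadicIndex m x)` is the mass up to the right end of the
dyadic interval of level `m` containing `x`. -/
lemma partialMass_add_cylMass_antitone {x : ℝ} (hx : x ≤ 1) :
    Antitone fun m => partialMass m x + cylMass m (dyadicIndex m x) := by
  refine antitone_nat_of_succ_le fun m => ?_
  have hsplit := cylMass_two_mul_add_cylMass m (dyadicIndex m x)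
  simp only [partialMass_succ hx, dyadicIndex_succ hx]
  cases digit m x
  · have := cylMass_pos (m + 1) (2 * dyadicIndex m x + 1)
    simp only [Bool.toNat_false, Nat.cast_zero, zero_mul, add_zero]
    linarith
  · simp only [Bool.toNat_true, Nat.cast_one, one_mul]
    linarith

lemma bddAbove_range_partialMass (x : ℝ) : BddAbove (Set.range fun m => partialMass m x) :=
  ⟨1, Set.forall_mem_range.2 fun m => partialMass_le_one m x⟩

lemma partialMass_le_cdf (m : ℕ) (x : ℝ) : partialMass m x ≤ cdf x :=
  le_ciSup (bddAbove_range_partialMass x) m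

lemma cdf_le_partialMass_add_cylMass {x : ℝ} (hx : x ≤ 1) (m : ℕ) :
    cdf x ≤ partialMass m x + cylMass m (dyadicIndex m x) := by
  refine ciSup_le fun m' => ?_
  rcases le_total m' m with h | h
  · linarith [partialMass_monotone hx h, cylMass_pos m (dyadicIndex m x)]
  · linarith [partialMass_add_cylMass_antitone hx h, cylMass_pos m' (dyadicIndex m' x)]

lemma cdf_mono : Monotone cdf := fun _ y h =>
  ciSup_mono (bddAbove_range_partialMass y) fun m => partialMass_mono m h

lemma cdf_eq_partialMass {x : ℝ} (hx : x ≤ 1) {m : ℕ} (h : ∀ k, m ≤ k → digit k x = false) :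
    cdf x = partialMass m x := by
  have hstable : ∀ t, partialMass (m + t) x = partialMass m x := by
    intro t
    induction t with
    | zero => rfl
    | succ t ih => rw [← add_assoc, partialMass_succ hx, ih, h _ (by omega)]; simp
  refine le_antisymm (ciSup_le fun m' => ?_) (partialMass_le_cdf m x)
  rcases le_total m' m with h' | h'
  · exact partialMass_monotone hx h'
  · obtain ⟨t, rfl⟩ := Nat.exists_eq_add_of_le h'
    exact (hstable t).le

lemma digit_natCast_div_two_pow {i m k : ℕ} (h : m ≤ k) :
    digit k ((i : ℝ) / 2 ^ m) = false := by
  have hcast : (2 : ℝ) ^ (k + 1) * ((i : ℝ) / 2 ^ m) = ((i * 2 ^ (k - m) * 2 : ℕ) : ℝ) := by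
    rw [show k + 1 = (k - m) + m + 1 by omega]
    push_cast
    field_simp
    ring
  rw [digit, hcast, Nat.floor_natCast]
  simp

lemma dyadicIndex_natCast_div_two_pow {i m : ℕ} (hi : i ≤ 2 ^ m) :
    dyadicIndex m ((i : ℝ) / 2 ^ m) = i := by
  rw [dyadicIndex, mul_div_cancel₀ _ (by positivity), Nat.floor_natCast, min_eq_right hi]

lemma natCast_div_two_pow_le_one {i m : ℕ} (hi : i ≤ 2 ^ m) : (i : ℝ) / 2 ^ m ≤ 1 :=
  (div_le_one (by positivity)).2 (by exact_mod_cast hi)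

lemma cdf_natCast_div_two_pow {i m : ℕ} (hi : i ≤ 2 ^ m) :
    cdf ((i : ℝ) / 2 ^ m) = ∑ j ∈ Finset.range i, cylMass m j := by
  rw [cdf_eq_partialMass (natCast_div_two_pow_le_one hi) fun k hk => digit_natCast_div_two_pow hk,
    partialMass, dyadicIndex_natCast_div_two_pow hi]

lemma cdf_succ_div_two_pow_sub {i m : ℕ} (hi : i < 2 ^ m) :
    cdf (((i : ℝ) + 1) / 2 ^ m) - cdf ((i : ℝ) / 2 ^ m) = cylMass m i := by
  rw [← Nat.cast_add_one, cdf_natCast_div_two_pow hi, cdf_natCast_div_two_pow hi.le,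
    Finset.sum_range_succ, add_sub_cancel_left]

lemma digit_one (k : ℕ) : digit k 1 = false := by
  simpa using digit_natCast_div_two_pow (i := 1) (Nat.zero_le k)

lemma dyadicIndex_lt {x : ℝ} (hx₀ : 0 ≤ x) (hx₁ : x < 1) (m : ℕ) : dyadicIndex m x < 2 ^ m := by
  rw [dyadicIndex_eq_floor hx₁.le, Nat.floor_lt (by positivity)]
  push_cast
  nlinarith [pow_pos (two_pos : (0 : ℝ) < 2) m]

lemma cylMass_dyadicIndex_succ {x : ℝ} (hx : x ≤ 1) (m : ℕ) :
    cylMass (m + 1) (dyadicIndex (m + 1) x) =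
      cylMass m (dyadicIndex m x) * weight m (digit m x) := by
  rw [dyadicIndex_succ hx, cylMass_succ]

lemma cylMass_dyadicIndex_le_weight {x : ℝ} (hx : x ≤ 1) {k m : ℕ} (hkm : k < m) :
    cylMass m (dyadicIndex m x) ≤ weight k (digit k x) := by
  induction m, hkm using Nat.le_induction with
  | base =>
    rw [cylMass_dyadicIndex_succ hx]
    exact mul_le_of_le_one_left (weight_pos _ _).le (cylMass_le_one _ _)
  | succ m _ ih =>
    rw [cylMass_dyadicIndex_succ hx]
    exact (mul_le_of_le_one_right (cylMass_pos _ _).le (weight_le_one _ _)).trans ih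

lemma cdf_strictMonoOn : StrictMonoOn cdf (Set.Icc 0 1) := by
  rintro x ⟨hx₀, -⟩ y ⟨-, hy₁⟩ hxy
  obtain ⟨m, hm⟩ : ∃ m : ℕ, 2 / (y - x) < 2 ^ m :=
    pow_unbounded_of_one_lt _ (by norm_num)
  rw [div_lt_iff₀ (sub_pos.2 hxy)] at hm
  have hpos : (0 : ℝ) < 2 ^ m := by positivity
  set j := ⌊2 ^ m * x⌋₊ + 1
  have hj : (j : ℝ) = ⌊2 ^ m * x⌋₊ + 1 := by push_cast [j]; ring
  have hfloor := Nat.floor_le (mul_nonneg hpos.le hx₀)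
  have hfloor' := Nat.lt_floor_add_one (2 ^ m * x)
  have hjy : (j : ℝ) + 1 ≤ 2 ^ m * y := by linarith
  have hjm : j < 2 ^ m := by exact_mod_cast (show (j : ℝ) < (2 ^ m : ℕ) by push_cast; nlinarith)
  calc cdf x ≤ cdf ((j : ℝ) / 2 ^ m) := cdf_mono ((le_div_iff₀ hpos).2 (by linarith))
    _ < cdf (((j : ℝ) + 1) / 2 ^ m) := by
      linarith [cdf_succ_div_two_pow_sub hjm, cylMass_pos m j]
    _ ≤ cdf y := cdf_mono ((div_le_iff₀ hpos).2 (by linarith))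

lemma cdf_sub_le {x y δ : ℝ} {m : ℕ} (hx : 0 ≤ x) (hxy : x ≤ y) (hy : y ≤ 1)
    (hclose : 2 ^ m * (y - x) ≤ 1) (hδ : ∀ i, cylMass m i ≤ δ) : cdf y - cdf x ≤ 2 * δ := by
  have hindex : dyadicIndex m y ≤ dyadicIndex m x + 1 := by
    rw [dyadicIndex_eq_floor hy, dyadicIndex_eq_floor (by linarith), ← Nat.floor_add_one
      (by positivity)]
    exact Nat.floor_mono (by linarith)
  have hpartial : partialMass m y ≤ partialMass m x + δ := by
    calc partialMass m y ≤ ∑ i ∈ Finset.range (dyadicIndex m x + 1), cylMass m i :=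
          Finset.sum_le_sum_of_subset_of_nonneg (Finset.range_subset_range.2 hindex)
            fun i _ _ => (cylMass_pos m i).le
      _ ≤ partialMass m x + δ := by rw [Finset.sum_range_succ]; exact add_le_add le_rfl (hδ _)
  linarith [cdf_le_partialMass_add_cylMass hy m, hδ (dyadicIndex m y), partialMass_le_cdf m x]

lemma cdf_continuousOn : ContinuousOn cdf (Set.Icc 0 1) := by
  rw [Metric.continuousOn_iff]
  rintro b ⟨hb₀, hb₁⟩ ε hε
  obtain ⟨m, hm⟩ := exists_forall_cylMass_lt (by positivity : 0 < ε / 4)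
  have hpos : (0 : ℝ) < 2 ^ m := by positivity
  refine ⟨(2 ^ m)⁻¹, inv_pos.2 hpos, fun a ⟨ha₀, ha₁⟩ hab => ?_⟩
  rw [Real.dist_eq, abs_sub_lt_iff] at hab ⊢
  have key : ∀ {u v : ℝ}, 0 ≤ v → v ≤ u → u ≤ 1 → u - v < (2 ^ m)⁻¹ →
      cdf u - cdf v ≤ 2 * (ε / 4) := fun hv hvu hu h =>
    cdf_sub_le hv hvu hu (by simpa [hpos.ne'] using mul_le_mul_of_nonneg_left h.le hpos.le)
      fun i => (hm i).le
  rcases le_total a b with h | h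
  · have := cdf_mono h
    constructor <;> linarith [key ha₀ h hb₁ hab.2]
  · have := cdf_mono h
    constructor <;> linarith [key hb₀ h ha₁ hab.1]

lemma dyadicIndex_add_of_digit_eq_false {x : ℝ} (hx : x ≤ 1) {a t : ℕ}
    (h : ∀ k, a ≤ k → k < a + t → digit k x = false) :
    dyadicIndex (a + t) x = 2 ^ t * dyadicIndex a x := by
  induction t with
  | zero => simp
  | succ t ih =>
    rw [← add_assoc, dyadicIndex_succ hx, ih fun k h₁ h₂ => h k h₁ (by omega), h _ le_self_add
      (by omega), pow_succ]
    simp only [Bool.toNat_false, add_zero]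
    ring

def dyadicCover (a b i : ℕ) : Set ℝ :=
  if i ≤ 2 ^ a then Icc ((i : ℝ) / 2 ^ a) ((i : ℝ) / 2 ^ a + 2⁻¹ ^ b) else ∅

lemma ediam_dyadicCover_le (a b i : ℕ) : Metric.ediam (dyadicCover a b i) ≤ 2⁻¹ ^ b := by
  unfold dyadicCover
  split_ifs
  · rw [Real.ediam_Icc, add_sub_cancel_left, ofReal_inv_two_pow]
  · simp

lemma mem_dyadicCover_dyadicIndex {x : ℝ} (hx : x ∈ Icc 0 1) {a b : ℕ} (hab : a ≤ b)
    (h : ∀ k, a ≤ k → k < b → digit k x = false) : x ∈ dyadicCover a b (dyadicIndex a x) := by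
  obtain ⟨t, rfl⟩ := Nat.exists_eq_add_of_le hab
  have hindex := dyadicIndex_add_of_digit_eq_false hx.2 h
  have hlow := Nat.floor_le (mul_nonneg (pow_nonneg zero_le_two a) hx.1)
  have hhigh := Nat.lt_floor_add_one ((2 : ℝ) ^ (a + t) * x)
  rw [← dyadicIndex_eq_floor hx.2] at hlow hhigh
  rw [hindex] at hhigh
  push_cast at hhigh
  rw [dyadicCover, if_pos (dyadicIndex_le a x)]
  have hscale : (dyadicIndex a x : ℝ) / 2 ^ a = 2 ^ t * dyadicIndex a x * 2⁻¹ ^ (a + t) := by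
    rw [inv_pow, pow_add]
    field_simp
  have hx_eq : 2 ^ (a + t) * x * 2⁻¹ ^ (a + t) = x := by
    rw [inv_pow]
    field_simp
  constructor
  · rw [div_le_iff₀ (by positivity)]; linarith
  · rw [hscale]
    nlinarith [mul_lt_mul_of_pos_right hhigh (by positivity : (0 : ℝ) < 2⁻¹ ^ (a + t))]

def tailZeroSet (N : ℕ) : Set ℝ :=
  {x ∈ Icc 0 1 | ∀ k, Odd (block k) → N ≤ block k → digit k x = false}

def exceptionalSet : Set ℝ := ⋃ N, tailZeroSet N

lemma exceptionalSet_subset : exceptionalSet ⊆ Icc 0 1 :=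
  iUnion_subset fun _ _ hx => hx.1

lemma tailZeroSet_subset_iUnion_dyadicCover {N n : ℕ} (hn : Odd n) (hNn : N ≤ n) :
    tailZeroSet N ⊆ ⋃ i, dyadicCover (blockStart n) (blockStart (n + 1)) i := fun x hx =>
  mem_iUnion.2 ⟨_, mem_dyadicCover_dyadicIndex hx.1 (blockStart_strictMono n.lt_succ_self).le
    fun k h₁ h₂ => hx.2 k (by rwa [block_eq h₁ h₂]) (by rwa [block_eq h₁ h₂])⟩

/-- Block `n` is `n + 1` times longer than all blocks before it together
(`mul_blockStart_add_one_le`), which beats the count `2 ^ blockStart n + 1` of intervals. -/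
lemma tsum_ediam_dyadicCover_le {n : ℕ} {d : ℝ} (hd : 0 < d) (hn : 2 ≤ d * (n + 1)) :
    ∑' i, Metric.ediam (dyadicCover (blockStart n) (blockStart (n + 1)) i) ^ d ≤ 2⁻¹ ^ n := by
  set a := blockStart n
  set b := blockStart (n + 1)
  have hempty : ∀ i, 2 ^ a + 1 ≤ i → dyadicCover a b i = ∅ := fun i hi => by
    rw [dyadicCover, if_neg (by omega)]
  have hcount : ((2 ^ a + 1 : ℕ) : ℝ≥0∞) ≤ 2 ^ (a + 1) := by
    push_cast
    rw [pow_succ, mul_two]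
    exact add_le_add le_rfl (one_le_pow₀ one_le_two)
  have hab : ((n + 1) * (a + 1) : ℝ) ≤ b := by exact_mod_cast mul_blockStart_add_one_le n
  have hna : (n : ℝ) ≤ a := by exact_mod_cast le_blockStart n
  calc ∑' i, Metric.ediam (dyadicCover a b i) ^ d
      ≤ ((2 ^ a + 1 : ℕ) : ℝ≥0∞) * ((2⁻¹ : ℝ≥0∞) ^ b) ^ d :=
        tsum_ediam_rpow_le hd hempty fun i => ediam_dyadicCover_le a b i
    _ ≤ 2 ^ (a + 1) * ((2⁻¹ : ℝ≥0∞) ^ b) ^ d := mul_le_mul_left hcount _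
    _ ≤ 2⁻¹ ^ n := two_pow_mul_inv_two_pow_rpow_le (by push_cast; nlinarith)

lemma dimH_tailZeroSet (N : ℕ) : dimH (tailZeroSet N) = 0 := by
  refine dimH_eq_zero_of_hausdorffMeasure_eq_zero fun d hd => ?_
  have hd' : (0 : ℝ) < d := hd
  let n : ℕ → ℕ := fun ν => 2 * (N + ν) + 1
  have hνn : ∀ ν, ν ≤ n ν := fun ν => by simp only [n]; omega
  refine hausdorffMeasure_eq_zero_of_covers
    (fun ν => dyadicCover (blockStart (n ν)) (blockStart (n ν + 1))) tendsto_inv_two_pow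
    tendsto_inv_two_pow (fun ν i => (ediam_dyadicCover_le _ _ i).trans ?_)
    (fun ν => tailZeroSet_subset_iUnion_dyadicCover (odd_two_mul_add_one _)
      (by simp only [n]; omega)) ?_
  · exact pow_le_pow_right_of_le_one' (by norm_num)
      ((hνn ν).trans ((le_blockStart _).trans (blockStart_strictMono.monotone (by omega))))
  · filter_upwards [(tendsto_natCast_atTop_atTop.const_mul_atTop hd').eventually_ge_atTop 2]
      with ν hν
    refine (tsum_ediam_dyadicCover_le hd' ?_).trans
      (pow_le_pow_right_of_le_one' (by norm_num) (hνn ν))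
    have : (ν : ℝ) ≤ n ν + 1 := by exact_mod_cast (hνn ν).trans (Nat.le_succ _)
    nlinarith

lemma dimH_exceptionalSet : dimH exceptionalSet = 0 := by
  simp [exceptionalSet, dimH_iUnion, dimH_tailZeroSet]

def imageCover (n i : ℕ) : Set ℝ :=
  if i < 2 ^ blockStart (n + 1) ∧ cylMass (blockStart (n + 1)) i ≤ bias n then
    Icc (cdf ((i : ℝ) / 2 ^ blockStart (n + 1))) (cdf (((i : ℝ) + 1) / 2 ^ blockStart (n + 1)))
  else ∅

lemma ediam_imageCover_le (n i : ℕ) : Metric.ediam (imageCover n i) ≤ 2⁻¹ ^ ((n + 2)! ^ 2) := by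
  unfold imageCover
  split_ifs with h
  · rw [Real.ediam_Icc, cdf_succ_div_two_pow_sub h.1, ← ofReal_inv_two_pow]
    exact ENNReal.ofReal_le_ofReal h.2
  · simp

lemma mem_imageCover {x : ℝ} (hx : x ∈ Icc 0 1) {k : ℕ} (hodd : Odd (block k))
    (hk : digit k x = true) :
    cdf x ∈ imageCover (block k) (dyadicIndex (blockStart (block k + 1)) x) := by
  set M := blockStart (block k + 1)
  have hx₁ : x < 1 := hx.2.lt_of_ne (by rintro rfl; simp [digit_one] at hk)
  have hpos : (0 : ℝ) < 2 ^ M := by positivity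
  have hlow := Nat.floor_le (mul_nonneg hpos.le hx.1)
  have hhigh := Nat.lt_floor_add_one ((2 : ℝ) ^ M * x)
  rw [← dyadicIndex_eq_floor hx.2] at hlow hhigh
  have hmass := cylMass_dyadicIndex_le_weight hx.2 (lt_blockStart_block_add_one k)
  rw [hk, weight_true_of_odd hodd] at hmass
  rw [imageCover, if_pos ⟨dyadicIndex_lt hx.1 hx₁ M, hmass⟩]
  exact ⟨cdf_mono ((div_le_iff₀ hpos).2 (by linarith)),
    cdf_mono ((le_div_iff₀ hpos).2 (by linarith))⟩

lemma image_diff_exceptionalSet_subset (N : ℕ) :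
    cdf '' (Icc 0 1 \ exceptionalSet) ⊆ ⋃ p : ℕ × ℕ, imageCover (N + p.1) p.2 := by
  rintro _ ⟨x, ⟨hx, hxC⟩, rfl⟩
  have hxN : x ∉ tailZeroSet N := fun h => hxC (mem_iUnion_of_mem N h)
  simp only [tailZeroSet, mem_sep_iff, hx, true_and, not_forall, Bool.not_eq_false] at hxN
  obtain ⟨k, hodd, hNk, hk⟩ := hxN
  refine mem_iUnion.2 ⟨(block k - N, dyadicIndex (blockStart (block k + 1)) x), ?_⟩
  rw [Nat.add_sub_cancel' hNk]
  exact mem_imageCover hx hodd hk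

/-- The square in the exponent of `bias n` beats the count `2 ^ ((n + 2)! - 1)` of intervals. -/
lemma tsum_ediam_imageCover_le {n : ℕ} {d : ℝ} (hd : 0 < d) (hn : 2 ≤ d * n) :
    ∑' i, Metric.ediam (imageCover n i) ^ d ≤ 2⁻¹ ^ n := by
  have hempty : ∀ i, 2 ^ blockStart (n + 1) ≤ i → imageCover n i = ∅ := fun i hi => by
    rw [imageCover, if_neg (by omega)]
  have hM : (blockStart (n + 1) : ℝ) + 1 = (n + 2)! := by
    exact_mod_cast blockStart_add_one (n + 1)
  have hnF : (n : ℝ) ≤ (n + 2)! := by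
    exact_mod_cast (Nat.le_add_right n 2).trans (Nat.self_le_factorial _)
  calc ∑' i, Metric.ediam (imageCover n i) ^ d
      ≤ ((2 ^ blockStart (n + 1) : ℕ) : ℝ≥0∞) * ((2⁻¹ : ℝ≥0∞) ^ ((n + 2)! ^ 2)) ^ d :=
        tsum_ediam_rpow_le hd hempty (ediam_imageCover_le n)
    _ ≤ 2⁻¹ ^ n := by
        push_cast
        exact two_pow_mul_inv_two_pow_rpow_le (by push_cast; nlinarith)

lemma dimH_image_diff_exceptionalSet : dimH (cdf '' (Icc 0 1 \ exceptionalSet)) = 0 := by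
  refine dimH_eq_zero_of_hausdorffMeasure_eq_zero fun d hd => ?_
  have hd' : (0 : ℝ) < d := hd
  have hu : Tendsto (fun N : ℕ => 2⁻¹ ^ N * 2) atTop (𝓝 (0 : ℝ≥0∞)) := by
    simpa using ENNReal.Tendsto.mul_const tendsto_inv_two_pow (Or.inr ENNReal.ofNat_ne_top)
  refine hausdorffMeasure_eq_zero_of_covers (fun N (p : ℕ × ℕ) => imageCover (N + p.1) p.2)
    tendsto_inv_two_pow hu (fun N p => (ediam_imageCover_le _ _).trans ?_)
    image_diff_exceptionalSet_subset ?_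
  · refine pow_le_pow_right_of_le_one' (by norm_num) ?_
    calc N ≤ N + p.1 + 2 := by omega
      _ ≤ (N + p.1 + 2)! := Nat.self_le_factorial _
      _ ≤ (N + p.1 + 2)! ^ 2 := Nat.le_self_pow two_ne_zero _
  · filter_upwards [(tendsto_natCast_atTop_atTop.const_mul_atTop hd').eventually_ge_atTop 2]
      with N hN
    calc ∑' p : ℕ × ℕ, Metric.ediam (imageCover (N + p.1) p.2) ^ (d : ℝ)
        = ∑' j, ∑' i, Metric.ediam (imageCover (N + j) i) ^ (d : ℝ) := ENNReal.tsum_prod'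
      _ ≤ ∑' j, 2⁻¹ ^ (N + j) := ENNReal.tsum_le_tsum fun j =>
          tsum_ediam_imageCover_le hd' (hN.trans (by gcongr; exact_mod_cast le_self_add))
      _ = 2⁻¹ ^ N * 2 := by
          simp_rw [pow_add, ENNReal.tsum_mul_left, ENNReal.tsum_geometric,
            ENNReal.one_sub_inv_two, inv_inv]

end

end BlockBernoulli

theorem stmt_8 :
    ∃ f : ℝ → ℝ, ∃ C : Set ℝ, C ⊆ Set.Icc (0 : ℝ) 1 ∧
      StrictMonoOn f (Set.Icc (0 : ℝ) 1) ∧ ContinuousOn f (Set.Icc (0 : ℝ) 1) ∧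
      dimH C = 0 ∧ dimH (f '' (Set.Icc (0 : ℝ) 1 \ C)) = 0 :=
  ⟨BlockBernoulli.cdf, BlockBernoulli.exceptionalSet, BlockBernoulli.exceptionalSet_subset,
    BlockBernoulli.cdf_strictMonoOn, BlockBernoulli.cdf_continuousOn,
    BlockBernoulli.dimH_exceptionalSet, BlockBernoulli.dimH_image_diff_exceptionalSet⟩
end
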